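/- Let γ ∈ (0,1/2). There exist finite constants 0 < c ≤ c̃ < ∞, independent of γ and x, such that for all x ∈ ℝ: c·|x|^{1/(1−γ)}/(1/2 − γ) ≤ ∫₀^∞ min(|x·γ·t^{γ−1}|, |x·γ·t^{γ−1}|²) dt ≤ c̃·|x|^{1/(1−γ)}/(1/2 − γ). -/

import Mathlib

/-!
Substituting `t = A ^ (1 / (1 - γ)) * s` shows that the integral of
`min (A t^(γ-1)) (A t^(γ-1))²` over `(0, ∞)` is `A ^ (1 / (1 - γ))` times its value at `A = 1`,
and at `A = 1` the minimum switches branches at `t = 1`, which gives exactly `γ⁻¹ + (1 - 2γ)⁻¹`.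
For `A = |x| γ`, multiplying by `1/2 - γ` leaves `|x| ^ (1 / (1 - γ))` times
`γ ^ (γ / (1 - γ)) * (1 - γ) / 2`. Bernoulli's inequality for the exponent `γ / (1 - γ) ≤ 1`
gives `γ⁻¹ ^ (γ / (1 - γ)) ≤ 1 + (γ / (1 - γ)) (γ⁻¹ - 1) = 2`, so this factor lies in `[1/8, 1/2]`.
-/

open MeasureTheory Set

lemma integral_Ioi_comp_mul_rpow {E : Type*} [NormedAddCommGroup E] [NormedSpace ℝ E]
    (g : ℝ → E) {A p : ℝ} (hA : 0 < A) (hp : p ≠ 0) :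
    ∫ t in Ioi 0, g (A * t ^ p) = A ^ (-1 / p) • ∫ t in Ioi 0, g (t ^ p) := by
  set T := A ^ (-1 / p)
  have hT : 0 < T := Real.rpow_pos_of_pos hA _
  have hA_eq : A = T⁻¹ ^ p := by
    rw [Real.inv_rpow hT.le, ← Real.rpow_mul hA.le, div_mul_cancel₀ _ hp, Real.rpow_neg_one,
      inv_inv]
  have hcongr : ∀ t ∈ Ioi (0 : ℝ), g (A * t ^ p) = g ((T⁻¹ * t) ^ p) := fun t ht => by
    rw [Real.mul_rpow (inv_nonneg.2 hT.le) (le_of_lt ht), ← hA_eq]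
  rw [setIntegral_congr_fun measurableSet_Ioi hcongr,
    integral_comp_mul_left_Ioi (fun s => g (s ^ p)) 0 (inv_pos.2 hT), mul_zero, inv_inv]

lemma integral_Ioi_min_rpow_sq {γ : ℝ} (hγ₀ : 0 < γ) (hγ : γ < 1 / 2) :
    ∫ t in Ioi 0, min (t ^ (γ - 1)) ((t ^ (γ - 1)) ^ 2) = γ⁻¹ + (1 - 2 * γ)⁻¹ := by
  have hnear : EqOn (fun t : ℝ => min (t ^ (γ - 1)) ((t ^ (γ - 1)) ^ 2))
      (fun t => t ^ (γ - 1)) (Ioc 0 1) := fun t ht =>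
    min_eq_left <| le_self_pow₀
      (Real.one_le_rpow_of_pos_of_le_one_of_nonpos ht.1 ht.2 (by linarith)) two_ne_zero
  have hfar : EqOn (fun t : ℝ => min (t ^ (γ - 1)) ((t ^ (γ - 1)) ^ 2))
      (fun t => t ^ ((γ - 1) * 2)) (Ioi 1) := fun t ht => by
    have ht₀ : (0 : ℝ) ≤ t := zero_le_one.trans (le_of_lt ht)
    have hsq : (t ^ (γ - 1)) ^ 2 = t ^ ((γ - 1) * 2) := by
      exact_mod_cast (Real.rpow_mul_natCast ht₀ (γ - 1) 2).symm
    dsimp only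
    rw [← hsq]
    exact min_eq_right <| pow_le_of_le_one (Real.rpow_nonneg ht₀ _)
      (Real.rpow_le_one_of_one_le_of_nonpos (le_of_lt ht) (by linarith)) two_ne_zero
  have hint_near : IntegrableOn (fun t : ℝ => t ^ (γ - 1)) (Ioc 0 1) :=
    (intervalIntegral.intervalIntegrable_rpow' (by linarith)).1
  have hint_far : IntegrableOn (fun t : ℝ => t ^ ((γ - 1) * 2)) (Ioi 1) :=
    integrableOn_Ioi_rpow_of_lt (by linarith) zero_lt_one
  rw [← Ioc_union_Ioi_eq_Ioi zero_le_one,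
    setIntegral_union (Ioc_disjoint_Ioi le_rfl) measurableSet_Ioi
      (hint_near.congr_fun hnear.symm measurableSet_Ioc)
      (hint_far.congr_fun hfar.symm measurableSet_Ioi),
    setIntegral_congr_fun measurableSet_Ioc hnear, setIntegral_congr_fun measurableSet_Ioi hfar,
    ← intervalIntegral.integral_of_le zero_le_one, integral_rpow (Or.inl (by linarith)),
    integral_Ioi_rpow_of_lt (by linarith) zero_lt_one]
  have h1 : γ - 1 + 1 ≠ 0 := by linarith
  have h2 : (γ - 1) * 2 + 1 ≠ 0 := by linarith
  have h3 : 1 - γ * 2 ≠ 0 := by linarith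
  rw [Real.zero_rpow h1, Real.one_rpow, Real.one_rpow]
  field_simp
  ring

lemma integral_Ioi_min_abs_mul_rpow_sq {γ : ℝ} (hγ₀ : 0 < γ) (hγ : γ < 1 / 2) (x : ℝ) :
    ∫ t in Ioi 0, min |x * (γ * t ^ (γ - 1))| (|x * (γ * t ^ (γ - 1))| ^ 2)
      = γ ^ (1 / (1 - γ)) * (γ⁻¹ + (1 - 2 * γ)⁻¹) * |x| ^ (1 / (1 - γ)) := by
  have hγ₁ : γ < 1 := hγ.trans one_half_lt_one
  rcases eq_or_ne x 0 with rfl | hx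
  · simp [Real.zero_rpow (inv_ne_zero (sub_pos.2 hγ₁).ne')]
  have hA : 0 < |x| * γ := by positivity
  have habs : EqOn (fun t => min |x * (γ * t ^ (γ - 1))| (|x * (γ * t ^ (γ - 1))| ^ 2))
      (fun t => min (|x| * γ * t ^ (γ - 1)) ((|x| * γ * t ^ (γ - 1)) ^ 2)) (Ioi 0) :=
    fun t ht => by
      simp only [abs_mul, abs_of_pos hγ₀, abs_of_pos (Real.rpow_pos_of_pos ht _), mul_assoc]
  have hexp : -1 / (γ - 1) = 1 / (1 - γ) := by rw [← neg_sub, div_neg, neg_div, neg_neg]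
  rw [setIntegral_congr_fun measurableSet_Ioi habs,
    integral_Ioi_comp_mul_rpow (fun a => min a (a ^ 2)) hA (sub_neg.2 hγ₁).ne,
    integral_Ioi_min_rpow_sq hγ₀ hγ, smul_eq_mul, hexp, Real.mul_rpow (abs_nonneg x) hγ₀.le]
  ring

lemma half_le_rpow_div_one_sub {γ : ℝ} (hγ₀ : 0 < γ) (hγ : γ ≤ 1 / 2) :
    1 / 2 ≤ γ ^ (γ / (1 - γ)) := by
  have h1γ : 0 < 1 - γ := by linarith
  have hbern : γ⁻¹ ^ (γ / (1 - γ)) ≤ 2 := by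
    have h := rpow_one_add_le_one_add_mul_self (s := γ⁻¹ - 1) (p := γ / (1 - γ))
      (by linarith [inv_nonneg.2 hγ₀.le]) (by positivity)
      ((div_le_one h1γ).2 (by linarith))
    rwa [add_sub_cancel, show γ / (1 - γ) * (γ⁻¹ - 1) = 1 by field_simp, one_add_one_eq_two]
      at h
  rw [Real.inv_rpow hγ₀.le, inv_le_comm₀ (Real.rpow_pos_of_pos hγ₀ _) two_pos] at hbern
  rwa [one_div]

lemma rpow_mul_inv_add_inv_mul_mem_Icc {γ : ℝ} (hγ₀ : 0 < γ) (hγ : γ < 1 / 2) :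
    γ ^ (1 / (1 - γ)) * (γ⁻¹ + (1 - 2 * γ)⁻¹) * (1 / 2 - γ) ∈ Icc (1 / 8) (1 / 2) := by
  have h1γ : 0 < 1 - γ := by linarith
  have h12γ : 1 - γ * 2 ≠ 0 := by linarith
  have hsplit : γ ^ (1 / (1 - γ)) = γ * γ ^ (γ / (1 - γ)) := by
    rw [← Real.rpow_one_add' hγ₀.le (by positivity)]
    congr 1
    field_simp
    ring
  have hq_lower := half_le_rpow_div_one_sub hγ₀ hγ.le
  have hq_upper : γ ^ (γ / (1 - γ)) ≤ 1 :=
    Real.rpow_le_one hγ₀.le (by linarith) (div_nonneg hγ₀.le (by linarith))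
  have hval : γ ^ (1 / (1 - γ)) * (γ⁻¹ + (1 - 2 * γ)⁻¹) * (1 / 2 - γ)
      = γ ^ (γ / (1 - γ)) * ((1 - γ) / 2) := by
    rw [hsplit]
    field_simp
    ring
  rw [hval]
  constructor <;> nlinarith

theorem frac_kernel_integral_uniform_bounds :
    ∃ c ctil : ℝ, 0 < c ∧ c ≤ ctil ∧
      ∀ γ : ℝ, 0 < γ → γ < 1/2 → ∀ x : ℝ,
        c * |x| ^ (1 / (1 - γ)) / (1/2 - γ)
          ≤ ∫ t in Set.Ioi (0:ℝ),
              min |x * (γ * t ^ (γ - 1))| (|x * (γ * t ^ (γ - 1))| ^ 2) ∧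
        ∫ t in Set.Ioi (0:ℝ),
            min |x * (γ * t ^ (γ - 1))| (|x * (γ * t ^ (γ - 1))| ^ 2)
          ≤ ctil * |x| ^ (1 / (1 - γ)) / (1/2 - γ) := by
  refine ⟨1 / 8, 1 / 2, by norm_num, by norm_num, fun γ hγ₀ hγ x => ?_⟩
  have hD : 0 < 1 / 2 - γ := by linarith
  have hP : 0 ≤ |x| ^ (1 / (1 - γ)) := Real.rpow_nonneg (abs_nonneg x) _
  obtain ⟨hlower, hupper⟩ := rpow_mul_inv_add_inv_mul_mem_Icc hγ₀ hγ
  rw [integral_Ioi_min_abs_mul_rpow_sq hγ₀ hγ]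
  generalize γ ^ (1 / (1 - γ)) * (γ⁻¹ + (1 - 2 * γ)⁻¹) = K at hlower hupper ⊢
  rw [← mul_div_cancel_right₀ (K * |x| ^ (1 / (1 - γ))) hD.ne', mul_right_comm]
  exact ⟨div_le_div_of_nonneg_right (mul_le_mul_of_nonneg_right hlower hP) hD.le,
    div_le_div_of_nonneg_right (mul_le_mul_of_nonneg_right hupper hP) hD.le⟩
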